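/- arXiv:math/0408271 — 3 statements merged into one kernel-verified Lean document; each statement's English description precedes it below -/
import Mathlib

section
/- Let K be a number field and 𝔭 a finite prime of K. If the question of finiteness of the subvarieties W(p) (Mazur's non-archimedean question) has a positive answer for K and S = {𝔭}, then there does not exist a subset of K that is simultaneously infinite, 𝔭-adically discrete, and Diophantine over K. -/
/-!
Suppose `A` is infinite, `𝔭`-adically discrete, and the projection to a coordinate `t` of the
`K`-points of an affine variety `V`. For `a ∈ A` pick a `K`-point `p_a` of `V` with
`t(p_a) = a`. By discreteness every `K`-point of `V` close to `p_a` has `t = a`, so `t - a`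
vanishes on `W(p_a)`, while `p_a ∈ W(p_a)`. Hence the `W(p_a)` are pairwise distinct.
-/

open NumberField IsDedekindDomain

/-- A subset `A ⊆ K^k` is Diophantine over a field `K` if it is the projection of the zero
set of a polynomial with coefficients in `K`. -/
def DiophSet {K : Type*} [Field K] {k : ℕ} (A : Set (Fin k → K)) : Prop :=
  ∃ (n : ℕ) (f : MvPolynomial (Fin k ⊕ Fin n) K),
    ∀ t : Fin k → K, t ∈ A ↔ ∃ x : Fin n → K, MvPolynomial.eval (Sum.elim t x) f = 0

namespace MvPolynomial

variable {σ K L : Type*}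

theorem aeval_algebraMap_comp [CommSemiring K] [CommSemiring L] [Algebra K L] (z : σ → K)
    (f : MvPolynomial σ K) :
    aeval (algebraMap K L ∘ z) f = algebraMap K L (eval z f) :=
  aeval_algebraMap_apply (B := L) z f

section LocalZariskiClosure

/-- The paper's `W(p)` for the variety `V(S)`; the Zariski closure of a set of `K`-points is
encoded through the polynomials over `K` vanishing on it. -/
def localZariskiClosure [CommSemiring K] [CommSemiring L] [Algebra K L] [TopologicalSpace L]
    (S : Set (MvPolynomial σ K)) (pt : σ → L) : Set (σ → L) :=
  ⋂ U ∈ {U : Set (σ → L) | IsOpen U ∧ pt ∈ U},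
    {y | ∀ f : MvPolynomial σ K,
      (∀ z : σ → K, (∀ g ∈ S, eval z g = 0) → algebraMap K L ∘ z ∈ U → eval z f = 0) →
      aeval y f = 0}

variable [Field K] [CommRing L] [Algebra K L] [TopologicalSpace L]
  {S : Set (MvPolynomial σ K)}

theorem algebraMap_comp_mem_localZariskiClosure {z : σ → K} (hz : ∀ g ∈ S, eval z g = 0) :
    algebraMap K L ∘ z ∈ localZariskiClosure S (algebraMap K L ∘ z) := by
  refine Set.mem_iInter₂.2 fun U hU f hf => ?_
  rw [aeval_algebraMap_comp, hf z hz hU.2, map_zero]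

theorem apply_eq_of_mem_localZariskiClosure {pt y : σ → L} {i : σ} {a : K} {U : Set L}
    (hU : IsOpen U) (hpt : pt i ∈ U)
    (hconst : ∀ z : σ → K, (∀ g ∈ S, eval z g = 0) → algebraMap K L (z i) ∈ U → z i = a)
    (hy : y ∈ localZariskiClosure S pt) : y i = algebraMap K L a := by
  -- `X i - C a` vanishes on the `K`-points of `V(S)` in the neighbourhood `{x | x i ∈ U}`.
  have hvanish := Set.mem_iInter₂.1 hy ((fun x : σ → L => x i) ⁻¹' U)
    ⟨hU.preimage (continuous_apply i), hpt⟩ (X i - C a) fun z hz hzU => by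
      simp [hconst z hz hzU]
  simpa [sub_eq_zero] using hvanish

theorem infinite_image_localZariskiClosure [Nontrivial L] {i : σ} {A : Set K}
    (hA : (fun z : σ → K => z i) '' {z | ∀ g ∈ S, eval z g = 0} = A) (hinf : A.Infinite)
    (hdisc : ∀ x ∈ A, ∃ U : Set L, IsOpen U ∧ algebraMap K L x ∈ U ∧
      ∀ y ∈ A, algebraMap K L y ∈ U → y = x) :
    (localZariskiClosure S '' {y : σ → L | ∀ f ∈ S, aeval y f = 0}).Infinite := by
  have : Infinite A := hinf.to_subtype
  have hfiber : ∀ a : A, ∃ z : σ → K, (∀ g ∈ S, eval z g = 0) ∧ z i = a := by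
    rintro ⟨a, ha⟩
    rw [← hA] at ha
    exact ha
  choose z hzS hzi using hfiber
  have heq_of_mem : ∀ a b : A,
      algebraMap K L ∘ z b ∈ localZariskiClosure S (algebraMap K L ∘ z a) → b = a := by
    intro a b hb
    obtain ⟨U, hU, haU, hsep⟩ := hdisc a a.2
    have hbi : algebraMap K L (z b i) = algebraMap K L a :=
      apply_eq_of_mem_localZariskiClosure (y := algebraMap K L ∘ z b) hU
        (by simpa [hzi a] using haU) (fun x hx hxU => hsep _ (hA ▸ ⟨x, hx, rfl⟩) hxU) hb
    exact Subtype.ext ((algebraMap K L).injective (hzi b ▸ hbi))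
  have hinj : Function.Injective fun a => localZariskiClosure S (algebraMap K L ∘ z a) := by
    intro a b hab
    refine (heq_of_mem a b ?_).symm
    simp only at hab
    rw [hab]
    exact algebraMap_comp_mem_localZariskiClosure (hzS b)
  refine Set.infinite_of_injective_forall_mem hinj fun a => ⟨_, fun f hf => ?_, rfl⟩
  rw [aeval_algebraMap_comp, hzS a f hf, map_zero]

end LocalZariskiClosure

theorem image_apply_zeroLocus_rename {σ τ K : Type*} [CommSemiring K] (e : σ ≃ τ)
    (f : MvPolynomial σ K) (i : σ) :
    (fun z : τ → K => z (e i)) '' {z | eval z (rename e f) = 0} =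
      (fun z : σ → K => z i) '' {z | eval z f = 0} := by
  ext a
  simp only [Set.mem_image, eval_rename]
  constructor
  · rintro ⟨z, hz, rfl⟩
    exact ⟨z ∘ e, hz, rfl⟩
  · rintro ⟨z, hz, rfl⟩
    exact ⟨z ∘ e.symm, by simpa [Function.comp_assoc] using hz, by simp⟩

end MvPolynomial

open MvPolynomial in
theorem DiophSet.exists_image_apply_zeroLocus {K : Type*} [Field K] {A : Set K}
    (hA : DiophSet {t : Fin 1 → K | t 0 ∈ A}) :
    ∃ (N : ℕ) (S : Set (MvPolynomial (Fin N) K)) (i : Fin N),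
      (fun z : Fin N → K => z i) '' {z | ∀ g ∈ S, eval z g = 0} = A := by
  obtain ⟨n, f, hf⟩ := hA
  refine ⟨1 + n, {rename finSumFinEquiv f}, finSumFinEquiv (Sum.inl 0), ?_⟩
  simp only [Set.mem_singleton_iff, forall_eq, image_apply_zeroLocus_rename]
  ext a
  constructor
  · rintro ⟨z, hz, rfl⟩
    have hinl : (fun _ : Fin 1 => z (Sum.inl 0)) = z ∘ Sum.inl := by
      funext j
      rw [Subsingleton.elim j 0]
      rfl
    refine (hf fun _ => z (Sum.inl 0)).2 ⟨z ∘ Sum.inr, ?_⟩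
    rwa [hinl, Sum.elim_comp_inl_inr]
  · intro ha
    obtain ⟨x, hx⟩ := (hf fun _ => a).1 ha
    exact ⟨Sum.elim (fun _ => a) x, hx, rfl⟩

/-- Mazur's non-archimedean question for `K` and `S = {𝔭}`:  for every affine variety `V`
over `K` (cut out by a set `S` of polynomials), and every point `p` of `V(K_𝔭)`, let `W(p)`
be the set of `K_𝔭`-points of the intersection over all open neighbourhoods `U` of `p` of
the Zariski closures of `V(K) ∩ U`.  If for every such `V` only finitely many distinct sets
`W(p)` arise, then there is no subset of `K` that is simultaneously infinite,
`𝔭`-adically discrete, and Diophantine over `K`. -/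
theorem stmt_3 (K : Type*) [Field K] [NumberField K] (v : HeightOneSpectrum (𝓞 K))
    (hMazur : ∀ (n : ℕ) (S : Set (MvPolynomial (Fin n) K)),
      Set.Finite ((fun pt : Fin n → v.adicCompletion K =>
          ⋂ U ∈ {U : Set (Fin n → v.adicCompletion K) | IsOpen U ∧ pt ∈ U},
            {y : Fin n → v.adicCompletion K | ∀ f : MvPolynomial (Fin n) K,
              (∀ z : Fin n → K, (∀ g ∈ S, MvPolynomial.eval z g = 0) →
                (fun i => algebraMap K (v.adicCompletion K) (z i)) ∈ U →
                MvPolynomial.eval z f = 0) →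
              MvPolynomial.aeval y f = 0}) ''
        {y : Fin n → v.adicCompletion K | ∀ f ∈ S, MvPolynomial.aeval y f = 0})) :
    ¬ ∃ A : Set K, A.Infinite ∧
      (∀ x ∈ A, ∃ U : Set (v.adicCompletion K), IsOpen U ∧
        algebraMap K (v.adicCompletion K) x ∈ U ∧
        ∀ y ∈ A, algebraMap K (v.adicCompletion K) y ∈ U → y = x) ∧
      DiophSet {t : Fin 1 → K | t 0 ∈ A} := by
  rintro ⟨A, hinf, hdisc, hdioph⟩
  obtain ⟨N, S, i, hA⟩ := hdioph.exists_image_apply_zeroLocus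
  exact MvPolynomial.infinite_image_localZariskiClosure hA hinf hdisc (hMazur N S)
end

section
/- With notation as in the previous statement (denominator ideals 𝔡_n of x(nP) and 𝒮_n the set of primes dividing 𝔡_n): for nonzero integers m, n with gcd d = (m,n), one has 𝒮_m ∩ 𝒮_n = 𝒮_d. In particular, if gcd(m,n) = 1 then 𝒮_m ∩ 𝒮_n = ∅. -/
open NumberField IsDedekindDomain WeierstrassCurve
open scoped Multiplicative

/-- The `x`-coordinate of an affine point, with junk value `0` at the point at infinity. -/
noncomputable def xCoord {K : Type*} [Field K] {W : WeierstrassCurve.Affine K} :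
    W.Point → K
  | .zero => 0
  | .some x _ _ => x

/-- The short Weierstrass curve `y² = x³ + ax + b`. -/
def shortW {K : Type*} [Field K] (a b : K) : WeierstrassCurve.Affine K :=
  { a₁ := 0, a₂ := 0, a₃ := 0, a₄ := a, a₆ := b }

/-- `v` is a prime of good reduction for `W`: the coefficients are `v`-integral and the
discriminant is a `v`-unit. -/
def GoodPrime {K : Type*} [Field K] [NumberField K] (W : WeierstrassCurve.Affine K)
    (v : HeightOneSpectrum (𝓞 K)) : Prop :=
  v.valuation (K := K) W.a₄ ≤ 1 ∧ v.valuation (K := K) W.a₆ ≤ 1 ∧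
    v.valuation (K := K) W.Δ = 1

section Helpers

variable {F : Type*} {Γ₀ : Type*} [Field F] [LinearOrderedCommGroupWithZero Γ₀]
  (v : Valuation F Γ₀)

lemma val_mul_small {e f : F} (he : v e ≤ 1) (hf : v f < 1) : v (e * f) < 1 := by
  rw [v.map_mul]
  calc v e * v f ≤ 1 * v f := mul_le_mul_left he _
  _ = v f := one_mul _
  _ < 1 := hf

lemma val_small_mul_small {e f : F} (he : v e < 1) (hf : v f < 1) : v (e * f) < 1 :=
  val_mul_small v he.le hf

lemma val_mul_le_one {e f : F} (he : v e ≤ 1) (hf : v f ≤ 1) : v (e * f) ≤ 1 := by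
  rw [v.map_mul]
  calc v e * v f ≤ 1 * v f := mul_le_mul_left he _
  _ = v f := one_mul _
  _ ≤ 1 := hf

lemma val_natCast_le_one (n : ℕ) : v (n : F) ≤ 1 := by
  induction n with
  | zero => simp
  | succ k ih =>
    push_cast
    exact le_trans (v.map_add _ _) (max_le ih (le_of_eq v.map_one))

lemma val_two_le_one : v (2 : F) ≤ 1 := by
  have := val_natCast_le_one v 2; exact_mod_cast this

lemma val_three_le_one : v (3 : F) ≤ 1 := by
  have := val_natCast_le_one v 3; exact_mod_cast this

lemma val_unit_one_sub {e : F} (he : v e < 1) : v (1 - e) = 1 ∧ (1 : F) - e ≠ 0 := by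
  refine ⟨v.map_one_sub_of_lt he, fun h => ?_⟩
  have h2 := v.map_one_sub_of_lt he
  rw [h, v.map_zero] at h2
  exact zero_ne_one h2

lemma val_unit_one_add {e : F} (he : v e < 1) : v (1 + e) = 1 ∧ (1 : F) + e ≠ 0 := by
  have h := val_unit_one_sub v (e := -e) (by rwa [v.map_neg])
  rwa [sub_neg_eq_add] at h


/-- On the curve chart: a point with `1 < v x` has `y ≠ 0`, and small `t = x/y`, `s = 1/y`. -/
lemma ts_small {a b x y : F} (ha : v a ≤ 1) (hb : v b ≤ 1)
    (heq : y ^ 2 = x ^ 3 + a * x + b) (hx : 1 < v x) :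
    y ≠ 0 ∧ v (x / y) < 1 ∧ v (1 / y) < 1 := by
  have hx0 : x ≠ 0 := by
    rintro rfl; rw [v.map_zero] at hx; exact absurd hx (by simp)
  have hvx0 : v x ≠ 0 := by simpa [v.zero_iff] using hx0
  have hval : v y ^ 2 = v x ^ 3 := by
    rw [← v.map_pow, heq, show x ^ 3 + a * x + b = x ^ 3 + (a * x + b) by ring,
      v.map_add_eq_of_lt_left, v.map_pow]
    rw [v.map_pow]
    refine lt_of_le_of_lt (le_trans (v.map_add _ _) (max_le ?_ (le_trans hb hx.le)))
      (lt_self_pow₀ hx (by norm_num))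
    rw [v.map_mul]
    calc v a * v x ≤ 1 * v x := mul_le_mul_left ha _
    _ = v x := one_mul _
  have hy0 : y ≠ 0 := by
    rintro rfl
    rw [show v (0 : F) = 0 from v.map_zero] at hval
    simp only [ne_eq, OfNat.ofNat_ne_zero, not_false_eq_true, zero_pow] at hval
    exact pow_ne_zero 3 hvx0 hval.symm
  have hvy0 : v y ≠ 0 := by simpa [v.zero_iff] using hy0
  have hxy : v x < v y := by
    by_contra hle
    push_neg at hle
    have hlt : v y ^ 2 < v x ^ 3 :=
      lt_of_le_of_lt (pow_le_pow_left' hle 2) (pow_lt_pow_right₀ hx (by norm_num))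
    exact absurd hval hlt.ne
  refine ⟨hy0, ?_, ?_⟩
  · have h1 : v (x / y) * v y = v x := by
      rw [← v.map_mul, div_mul_cancel₀ _ hy0]
    by_contra hge
    push_neg at hge
    have h2 : v y ≤ v x := by
      calc v y = 1 * v y := (one_mul _).symm
      _ ≤ v (x / y) * v y := mul_le_mul_left hge _
      _ = v x := h1
    exact absurd hxy (not_lt.mpr h2)
  · have h1 : v (1 / y) * v y = 1 := by
      rw [← v.map_mul, one_div, inv_mul_cancel₀ hy0, v.map_one]
    by_contra hge
    push_neg at hge
    have h2 : v y ≤ 1 := by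
      calc v y = 1 * v y := (one_mul _).symm
      _ ≤ v (1 / y) * v y := mul_le_mul_left hge _
      _ = 1 := h1
    exact absurd (lt_trans hx hxy) (not_lt.mpr h2)

/-- The key (t,s)-chart computation. -/
lemma ts_main {a b t₁ s₁ t₂ s₂ m c τ σ : F}
    (ha : v a ≤ 1) (hb : v b ≤ 1)
    (rel₁ : s₁ = t₁ ^ 3 + a * t₁ * s₁ ^ 2 + b * s₁ ^ 3)
    (relτ : σ = τ ^ 3 + a * τ * σ ^ 2 + b * σ ^ 3)
    (line₁ : s₁ = m * t₁ + c) (line₂ : s₂ = m * t₂ + c) (lineτ : σ = m * τ + c)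
    (hσ0 : σ ≠ 0)
    (ht₁ : v t₁ < 1) (hs₁ : v s₁ < 1) (ht₂ : v t₂ < 1)
    (hm : v m < 1)
    (hmult : (t₁ ≠ t₂ ∧ s₂ = t₂ ^ 3 + a * t₂ * s₂ ^ 2 + b * s₂ ^ 3) ∨
      (t₁ = t₂ ∧ m * (1 - 2 * a * t₁ * s₁ - 3 * b * s₁ ^ 2) = 3 * t₁ ^ 2 + a * s₁ ^ 2)) :
    v σ < v τ := by
  have hc : v c < 1 := by
    have hcdef : c = s₁ - m * t₁ := by linear_combination -line₁
    rw [hcdef]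
    exact lt_of_le_of_lt (v.map_sub _ _) (max_lt hs₁ (val_small_mul_small v hm ht₁))
  have hm2 : v (m ^ 2) ≤ 1 := by
    rw [v.map_pow]; exact pow_le_one' hm.le 2
  -- the cubic `ψ(t) = A t³ + B t² + C t + D₀` cut out by the line on the curve
  set A : F := 1 + (a * m ^ 2 + b * m ^ 3) with hAdef
  set B : F := 2 * a * m * c + 3 * b * m ^ 2 * c with hBdef
  set C : F := a * c ^ 2 + 3 * b * m * c ^ 2 - m with hCdef
  set D0 : F := b * c ^ 3 - c with hD0def
  have hAunit : v A = 1 ∧ A ≠ 0 := by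
    refine val_unit_one_add v (lt_of_le_of_lt (v.map_add _ _) (max_lt ?_ ?_))
    · rw [pow_two, ← mul_assoc]
      exact val_mul_small v (val_mul_le_one v ha hm.le) hm
    · rw [pow_succ, ← mul_assoc]
      exact val_mul_small v (val_mul_le_one v hb hm2) hm
  have hψ : ∀ t sp : F, sp = m * t + c → sp = t ^ 3 + a * t * sp ^ 2 + b * sp ^ 3 →
      A * t ^ 3 + B * t ^ 2 + C * t + D0 = 0 := by
    intro t sp h1 h2
    subst h1
    rw [hAdef, hBdef, hCdef, hD0def]
    linear_combination -h2
  have ψ₁ := hψ t₁ s₁ line₁ rel₁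
  have ψτ := hψ τ σ lineτ relτ
  -- bound on v (B / A)
  have hBA : v (B / A) < 1 := by
    have h1 : v (B / A) * v A = v B := by
      rw [← v.map_mul, div_mul_cancel₀ _ hAunit.2]
    rw [hAunit.1, mul_one] at h1
    rw [h1, hBdef]
    refine lt_of_le_of_lt (v.map_add _ _) (max_lt ?_ ?_)
    · exact val_mul_small v (val_mul_le_one v (val_mul_le_one v (val_two_le_one v) ha) hm.le) hc
    · exact val_mul_small v (val_mul_le_one v (val_mul_le_one v (val_three_le_one v) hb) hm2) hc
  -- the third root of the cubic, and the conclusion that τ is one of the three roots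
  have hτsmall : v τ < 1 := by
    rcases hmult with ⟨hne, rel₂⟩ | ⟨heq, htan⟩
    · have ψ₂ := hψ t₂ s₂ line₂ rel₂
      set t₃ : F := -(B / A) - t₁ - t₂ with ht₃def
      have hA3 : A * t₃ = -B - A * t₁ - A * t₂ := by
        rw [ht₃def, mul_sub, mul_sub, mul_neg, mul_comm A (B / A), div_mul_cancel₀ B hAunit.2]
      set E : F := C - A * (t₁ * t₂ + t₁ * t₃ + t₂ * t₃) with hEdef
      set Fc : F := D0 + A * (t₁ * t₂ * t₃) with hFdef
      have gen : ∀ t : F, A * t ^ 3 + B * t ^ 2 + C * t + D0 =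
          A * (t - t₁) * (t - t₂) * (t - t₃) + E * t + Fc := by
        intro t
        rw [hEdef, hFdef]
        linear_combination t ^ 2 * hA3
      have g1 : E * t₁ + Fc = 0 := by
        have h := gen t₁; rw [ψ₁] at h; linear_combination -h
      have g2 : E * t₂ + Fc = 0 := by
        have h := gen t₂; rw [ψ₂] at h; linear_combination -h
      have hE : E = 0 := by
        have h : E * (t₁ - t₂) = 0 := by linear_combination g1 - g2
        rcases mul_eq_zero.mp h with h' | h'
        · exact h'
        · exact absurd (sub_eq_zero.mp h') hne
      have hF : Fc = 0 := by linear_combination g1 - t₁ * hE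
      have hfact : A * (τ - t₁) * (τ - t₂) * (τ - t₃) = 0 := by
        have h := gen τ; rw [ψτ] at h
        linear_combination -h - τ * hE - hF
      have ht₃small : v t₃ < 1 := by
        rw [ht₃def]
        refine lt_of_le_of_lt (v.map_sub _ _) (max_lt ?_ ht₂)
        refine lt_of_le_of_lt (v.map_sub _ _) (max_lt ?_ ht₁)
        rwa [v.map_neg]
      rcases mul_eq_zero.mp hfact with h | h
      · rcases mul_eq_zero.mp h with h' | h'
        · rcases mul_eq_zero.mp h' with h'' | h''
          · exact absurd h'' hAunit.2
          · rw [sub_eq_zero.mp h'']; exact ht₁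
        · rw [sub_eq_zero.mp h']; exact ht₂
      · rw [sub_eq_zero.mp h]; exact ht₃small
    · -- tangent case
      set t₃ : F := -(B / A) - 2 * t₁ with ht₃def
      have hA3 : A * t₃ = -B - 2 * A * t₁ := by
        rw [ht₃def, mul_sub, mul_neg, mul_comm A (B / A), div_mul_cancel₀ B hAunit.2]
        ring
      set E : F := C - A * (t₁ * t₁ + 2 * t₁ * t₃) with hEdef
      set Fc : F := D0 + A * (t₁ * t₁ * t₃) with hFdef
      have gen : ∀ t : F, A * t ^ 3 + B * t ^ 2 + C * t + D0 =
          A * (t - t₁) * (t - t₁) * (t - t₃) + E * t + Fc := by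
        intro t
        rw [hEdef, hFdef]
        linear_combination t ^ 2 * hA3
      have hE : E = 0 := by
        have h1 : E = 3 * A * t₁ ^ 2 + 2 * B * t₁ + C := by
          rw [hEdef]
          linear_combination (-2 * t₁) * hA3
        have h2 : 3 * A * t₁ ^ 2 + 2 * B * t₁ + C = 0 := by
          rw [hAdef, hBdef, hCdef]
          linear_combination -htan + (-((a + 3 * b * m) * (s₁ + m * t₁ + c) + 2 * a * m * t₁))
            * line₁
        rw [h1, h2]
      have hF : Fc = 0 := by
        have h := gen t₁; rw [ψ₁, hE] at h; linear_combination -h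
      have hfact : A * (τ - t₁) * (τ - t₁) * (τ - t₃) = 0 := by
        have h := gen τ; rw [ψτ, hE, hF] at h
        linear_combination -h
      have ht₃small : v t₃ < 1 := by
        rw [ht₃def]
        refine lt_of_le_of_lt (v.map_sub _ _) (max_lt ?_ ?_)
        · rw [v.map_neg]; exact hBA
        · exact val_mul_small v (val_two_le_one v) ht₁
      rcases mul_eq_zero.mp hfact with h | h
      · rcases mul_eq_zero.mp h with h' | h'
        · rcases mul_eq_zero.mp h' with h'' | h''
          · exact absurd h'' hAunit.2
          · rw [sub_eq_zero.mp h'']; exact ht₁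
        · rw [sub_eq_zero.mp h']; exact ht₁
      · rw [sub_eq_zero.mp h]; exact ht₃small
  -- σ is small
  have hσsmall : v σ < 1 := by
    rw [lineτ]
    exact lt_of_le_of_lt (v.map_add _ _) (max_lt (val_small_mul_small v hm hτsmall) hc)
  have hvσ0 : v σ ≠ 0 := by simpa [v.zero_iff] using hσ0
  -- final ultrametric argument
  by_contra hle
  push_neg at hle
  rcases eq_or_ne τ 0 with rfl | hτ0
  · have h : σ = b * σ ^ 3 := by linear_combination relτ
    have : v σ < v σ := by
      conv_lhs => rw [h]
      refine lt_of_le_of_lt ?_ (?_ : v σ ^ 3 < v σ)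
      · rw [v.map_mul, v.map_pow]
        calc v b * v σ ^ 3 ≤ 1 * v σ ^ 3 := mul_le_mul_left hb _
        _ = v σ ^ 3 := one_mul _
      · exact pow_lt_self_of_lt_one₀ (zero_lt_iff.mpr hvσ0) hσsmall (by norm_num)
    exact absurd this (lt_irrefl _)
  · have hvτ0 : v τ ≠ 0 := by simpa [v.zero_iff] using hτ0
    have hτ2 : v τ ^ 2 < 1 := pow_lt_one₀ zero_le' hτsmall (by norm_num)
    have hσ2 : v σ ^ 2 < 1 := pow_lt_one₀ zero_le' hσsmall (by norm_num)
    have hτ2 : v τ ^ 2 < 1 := pow_lt_one₀ zero_le' hτsmall (by norm_num)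
    have smul : ∀ x : Γ₀, x < 1 → x * v σ < v σ := by
      intro x hx
      have h : v σ * x < v σ * 1 := mul_lt_mul_of_pos_left hx (zero_lt_iff.mpr hvσ0)
      rwa [mul_one, mul_comm] at h
    have h1 : v (τ ^ 3) < v σ := by
      rw [show τ ^ 3 = τ ^ 2 * τ by ring, v.map_mul]
      calc v (τ ^ 2) * v τ ≤ v (τ ^ 2) * v σ := mul_le_mul_right hle _
      _ < v σ := smul _ (by rw [v.map_pow]; exact hτ2)
    have h2 : v (a * τ * σ ^ 2) < v σ := by
      rw [show a * τ * σ ^ 2 = a * τ * σ * σ by ring, v.map_mul]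
      exact smul _ (val_mul_small v (val_mul_le_one v ha hτsmall.le) hσsmall)
    have h3 : v (b * σ ^ 3) < v σ := by
      rw [show b * σ ^ 3 = b * σ ^ 2 * σ by ring, v.map_mul]
      refine smul _ (val_mul_small v hb ?_)
      rw [v.map_pow]; exact hσ2
    have key : v σ < v σ := by
      conv_lhs => rw [relτ]
      exact lt_of_le_of_lt (v.map_add _ _)
        (max_lt (lt_of_le_of_lt (v.map_add _ _) (max_lt h1 h2)) h3)
    exact absurd key (lt_irrefl _)

/-- Key lemma: the sum of two affine points in the kernel of reduction (i.e. with `1 < v x`)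
again has `1 < v x`, expressed via the explicit addition formula `x₃ = L² - x₁ - x₂`. -/
lemma kernel_addX {a b x₁ y₁ x₂ y₂ L : F}
    (ha : v a ≤ 1) (hb : v b ≤ 1)
    (heq₁ : y₁ ^ 2 = x₁ ^ 3 + a * x₁ + b) (heq₂ : y₂ ^ 2 = x₂ ^ 3 + a * x₂ + b)
    (hx₁ : 1 < v x₁) (hx₂ : 1 < v x₂)
    (hY0eq : (L * (L ^ 2 - x₁ - x₂ - x₁) + y₁) ^ 2
      = (L ^ 2 - x₁ - x₂) ^ 3 + a * (L ^ 2 - x₁ - x₂) + b)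
    (hcase : (x₁ ≠ x₂ ∧ L * (x₁ - x₂) = y₁ - y₂) ∨
      (x₁ = x₂ ∧ y₁ = y₂ ∧ y₁ + y₁ ≠ 0 ∧ L * (2 * y₁) = 3 * x₁ ^ 2 + a)) :
    1 < v (L ^ 2 - x₁ - x₂) := by
  obtain ⟨hy₁0, hvt₁', hvs₁'⟩ := ts_small v ha hb heq₁ hx₁
  obtain ⟨hy₂0, hvt₂', hvs₂'⟩ := ts_small v ha hb heq₂ hx₂
  obtain ⟨s₁, hs₁⟩ : ∃ s, s * y₁ = 1 := ⟨1 / y₁, by field_simp⟩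
  obtain ⟨s₂, hs₂⟩ : ∃ s, s * y₂ = 1 := ⟨1 / y₂, by field_simp⟩
  obtain ⟨t₁, ht₁def⟩ : ∃ t, t = x₁ * s₁ := ⟨_, rfl⟩
  obtain ⟨t₂, ht₂def⟩ : ∃ t, t = x₂ * s₂ := ⟨_, rfl⟩
  have hs₁eq : s₁ = 1 / y₁ := by rw [eq_div_iff hy₁0]; exact hs₁
  have hs₂eq : s₂ = 1 / y₂ := by rw [eq_div_iff hy₂0]; exact hs₂
  have hvs₁ : v s₁ < 1 := by rw [hs₁eq]; exact hvs₁'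
  have hvs₂ : v s₂ < 1 := by rw [hs₂eq]; exact hvs₂'
  have hvt₁ : v t₁ < 1 := by rw [ht₁def, hs₁eq, ← div_eq_mul_one_div]; exact hvt₁'
  have hvt₂ : v t₂ < 1 := by rw [ht₂def, hs₂eq, ← div_eq_mul_one_div]; exact hvt₂'
  have hs₁0 : s₁ ≠ 0 := fun h => by rw [h, zero_mul] at hs₁; exact zero_ne_one hs₁
  have hss1 : v (s₁ ^ 2) < 1 := by
    rw [pow_two]; exact val_small_mul_small v hvs₁ hvs₁
  have htt1 : v (t₁ ^ 2) < 1 := by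
    rw [pow_two]; exact val_small_mul_small v hvt₁ hvt₁
  have rel₁ : s₁ = t₁ ^ 3 + a * t₁ * s₁ ^ 2 + b * s₁ ^ 3 := by
    rw [ht₁def]
    linear_combination s₁ ^ 3 * heq₁ + (-y₁ * s₁ ^ 2 - s₁) * hs₁
  have rel₂ : s₂ = t₂ ^ 3 + a * t₂ * s₂ ^ 2 + b * s₂ ^ 3 := by
    rw [ht₂def]
    linear_combination s₂ ^ 3 * heq₂ + (-y₂ * s₂ ^ 2 - s₂) * hs₂
  obtain ⟨x₃, hx₃def⟩ : ∃ z : F, z = L ^ 2 - x₁ - x₂ := ⟨_, rfl⟩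
  obtain ⟨Y, hYdef⟩ : ∃ z : F, z = L * (x₃ - x₁) + y₁ := ⟨_, rfl⟩
  obtain ⟨μ, hμdef⟩ : ∃ z : F, z = y₁ - L * x₁ := ⟨_, rfl⟩
  rw [← hx₃def]
  have hYcurve : Y ^ 2 = x₃ ^ 3 + a * x₃ + b := by
    linear_combination (Y + x₃ * L - L * x₁ + y₁) * hYdef + (-x₃ ^ 2 + x₃ * x₁ + x₃ * x₂
      - L ^ 2 * x₁ + L ^ 2 * x₂ + 2 * L * y₁ - x₁ ^ 2 - 2 * x₁ * x₂ - x₂ ^ 2 - a) * hx₃def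
      + hY0eq
  have hYeq : Y = L * x₃ + μ := by linear_combination hYdef - hμdef
  -- construct the slope/intercept data of the line in the (t, s)-chart
  obtain ⟨m, c, hvm, hmμ, line₁, line₂, hmult⟩ :
      ∃ m c : F, v m < 1 ∧ m * μ = -L ∧ s₁ = m * t₁ + c ∧ s₂ = m * t₂ + c ∧
        ((t₁ ≠ t₂ ∧ s₂ = t₂ ^ 3 + a * t₂ * s₂ ^ 2 + b * s₂ ^ 3) ∨
          (t₁ = t₂ ∧ m * (1 - 2 * a * t₁ * s₁ - 3 * b * s₁ ^ 2) = 3 * t₁ ^ 2 + a * s₁ ^ 2)) := by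
    rcases hcase with ⟨hx12, hL⟩ | ⟨hx, hy, h2y, hL2⟩
    · -- chord case
      obtain ⟨D, hDdef⟩ : ∃ z : F, z = x₁ * y₂ - x₂ * y₁ := ⟨_, rfl⟩
      have hDt : D = (t₁ - t₂) * (y₁ * y₂) := by
        linear_combination hDdef + (-y₁ * y₂) * ht₁def + (y₁ * y₂) * ht₂def
          + (-y₂ * x₁) * hs₁ + (y₁ * x₂) * hs₂
      have hD0 : D ≠ 0 := by
        intro hD
        have ht12 : t₁ = t₂ := by
          have h := hDt
          rw [hD] at h
          rcases mul_eq_zero.mp h.symm with h' | h'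
          · exact sub_eq_zero.mp h'
          · exact absurd h' (mul_ne_zero hy₁0 hy₂0)
        have hfac : (s₁ - s₂) * (1 - (a * t₁ * (s₁ + s₂) + b * (s₁ ^ 2 + s₁ * s₂ + s₂ ^ 2))) = 0 := by
          linear_combination rel₁ - rel₂ + (t₁ ^ 2 + t₁ * t₂ + t₂ ^ 2 + a * s₂ ^ 2) * ht12
        have hUv := val_unit_one_sub v
          (e := a * t₁ * (s₁ + s₂) + b * (s₁ ^ 2 + s₁ * s₂ + s₂ ^ 2)) (by
            refine lt_of_le_of_lt (v.map_add _ _) (max_lt ?_ ?_)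
            · exact val_mul_small v (val_mul_le_one v ha hvt₁.le)
                (lt_of_le_of_lt (v.map_add _ _) (max_lt hvs₁ hvs₂))
            · refine val_mul_small v hb ?_
              refine lt_of_le_of_lt (v.map_add _ _) (max_lt (lt_of_le_of_lt (v.map_add _ _)
                (max_lt hss1 (val_small_mul_small v hvs₁ hvs₂))) ?_)
              rw [pow_two]; exact val_small_mul_small v hvs₂ hvs₂)
        rcases mul_eq_zero.mp hfac with h' | h'
        · have hss : s₁ = s₂ := sub_eq_zero.mp h'
          have hyy : y₁ = y₂ := by
            have h2 : (y₁ - y₂) * s₁ = 0 := by linear_combination hs₁ - hs₂ - y₂ * hss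
            rcases mul_eq_zero.mp h2 with h'' | h''
            · exact sub_eq_zero.mp h''
            · exact absurd h'' hs₁0
          have hxx : x₁ = x₂ := by
            have h2 : (x₁ - x₂) * s₁ = 0 := by
              linear_combination -ht₁def + ht₂def + ht12 - x₂ * hss
            rcases mul_eq_zero.mp h2 with h'' | h''
            · exact sub_eq_zero.mp h''
            · exact absurd h'' hs₁0
          exact hx12 hxx
        · exact hUv.2 h'
      have ht₁₂ : t₁ ≠ t₂ := by
        intro h
        exact hD0 (by rw [hDt, h, sub_self, zero_mul])
      obtain ⟨m, hmdef⟩ : ∃ z : F, z = (y₂ - y₁) / D := ⟨_, rfl⟩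
      have hmD : m * D = y₂ - y₁ := by rw [hmdef]; exact div_mul_cancel₀ _ hD0
      have hline0 : (s₁ - s₂) * D = (y₂ - y₁) * (t₁ - t₂) := by
        linear_combination (s₁ - s₂) * hDdef + (y₁ - y₂) * ht₁def + (-y₁ + y₂) * ht₂def
          + (x₁ - x₂) * hs₁ + (-x₁ + x₂) * hs₂
      have hline : s₁ - s₂ = m * (t₁ - t₂) := by
        have h : (s₁ - s₂) * D = m * (t₁ - t₂) * D := by
          linear_combination hline0 - (t₁ - t₂) * hmD
        exact mul_right_cancel₀ hD0 h
      have hNU : (s₁ - s₂) * (1 - (a * t₂ * (s₁ + s₂) + b * (s₁ ^ 2 + s₁ * s₂ + s₂ ^ 2)))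
          = (t₁ - t₂) * (t₁ ^ 2 + t₁ * t₂ + t₂ ^ 2 + a * s₁ ^ 2) := by
        linear_combination rel₁ - rel₂
      have hU := val_unit_one_sub v
        (e := a * t₂ * (s₁ + s₂) + b * (s₁ ^ 2 + s₁ * s₂ + s₂ ^ 2)) (by
          refine lt_of_le_of_lt (v.map_add _ _) (max_lt ?_ ?_)
          · exact val_mul_small v (val_mul_le_one v ha hvt₂.le)
              (lt_of_le_of_lt (v.map_add _ _) (max_lt hvs₁ hvs₂))
          · refine val_mul_small v hb ?_
            refine lt_of_le_of_lt (v.map_add _ _) (max_lt (lt_of_le_of_lt (v.map_add _ _)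
              (max_lt hss1 (val_small_mul_small v hvs₁ hvs₂))) ?_)
            rw [pow_two]; exact val_small_mul_small v hvs₂ hvs₂)
      have hmU : m * (1 - (a * t₂ * (s₁ + s₂) + b * (s₁ ^ 2 + s₁ * s₂ + s₂ ^ 2)))
          = t₁ ^ 2 + t₁ * t₂ + t₂ ^ 2 + a * s₁ ^ 2 := by
        have h : m * (1 - (a * t₂ * (s₁ + s₂) + b * (s₁ ^ 2 + s₁ * s₂ + s₂ ^ 2))) * (t₁ - t₂)
            = (t₁ ^ 2 + t₁ * t₂ + t₂ ^ 2 + a * s₁ ^ 2) * (t₁ - t₂) := by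
          linear_combination -(1 - (a * t₂ * (s₁ + s₂) + b * (s₁ ^ 2 + s₁ * s₂ + s₂ ^ 2))) * hline
            + hNU
        exact mul_right_cancel₀ (sub_ne_zero.mpr ht₁₂) h
      have hvm : v m < 1 := by
        have h1 : v m * v (1 - (a * t₂ * (s₁ + s₂) + b * (s₁ ^ 2 + s₁ * s₂ + s₂ ^ 2)))
            = v (t₁ ^ 2 + t₁ * t₂ + t₂ ^ 2 + a * s₁ ^ 2) := by
          rw [← v.map_mul, hmU]
        rw [hU.1, mul_one] at h1
        rw [h1]
        refine lt_of_le_of_lt (v.map_add _ _) (max_lt (lt_of_le_of_lt (v.map_add _ _)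
          (max_lt (lt_of_le_of_lt (v.map_add _ _) (max_lt htt1
            (val_small_mul_small v hvt₁ hvt₂))) ?_) ) (val_mul_small v ha hss1))
        rw [pow_two]; exact val_small_mul_small v hvt₂ hvt₂
      have hmμ : m * μ = -L := by
        have h : m * μ * D = -L * D := by
          linear_combination m * D * hμdef + (-L * x₁ + y₁) * hmD + L * hDdef + y₁ * hL
        exact mul_right_cancel₀ hD0 h
      exact ⟨m, s₁ - m * t₁, hvm, hmμ, by ring, by linear_combination -hline,
        Or.inl ⟨ht₁₂, rel₂⟩⟩
    · -- tangent case
      have hs21 : s₂ = s₁ := by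
        have h : (s₂ - s₁) * y₁ = 0 := by linear_combination hs₂ - hs₁ + s₂ * hy
        rcases mul_eq_zero.mp h with h' | h'
        · exact sub_eq_zero.mp h'
        · exact absurd h' hy₁0
      have ht21 : t₂ = t₁ := by rw [ht₂def, ht₁def, hs21, hx]
      have hu := val_unit_one_sub v (e := 2 * a * t₁ * s₁ + 3 * b * s₁ ^ 2) (by
        refine lt_of_le_of_lt (v.map_add _ _) (max_lt ?_ ?_)
        · exact val_mul_small v
            (val_mul_le_one v (val_mul_le_one v (val_two_le_one v) ha) hvt₁.le) hvs₁
        · exact val_mul_small v (val_mul_le_one v (val_three_le_one v) hb) hss1)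
      obtain ⟨m, hmdef⟩ : ∃ z : F, z = (3 * t₁ ^ 2 + a * s₁ ^ 2)
        / (1 - (2 * a * t₁ * s₁ + 3 * b * s₁ ^ 2)) := ⟨_, rfl⟩
      have hmu₂ : m * (1 - (2 * a * t₁ * s₁ + 3 * b * s₁ ^ 2)) = 3 * t₁ ^ 2 + a * s₁ ^ 2 := by
        rw [hmdef]; exact div_mul_cancel₀ _ hu.2
      have hvm : v m < 1 := by
        have h1 : v m * v (1 - (2 * a * t₁ * s₁ + 3 * b * s₁ ^ 2))
            = v (3 * t₁ ^ 2 + a * s₁ ^ 2) := by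
          rw [← v.map_mul, hmu₂]
        rw [hu.1, mul_one] at h1
        rw [h1]
        refine lt_of_le_of_lt (v.map_add _ _) (max_lt ?_ (val_mul_small v ha hss1))
        exact val_mul_small v (val_three_le_one v) htt1
      have h2ne : (2 : F) ≠ 0 := fun h => h2y (by rw [← two_mul, h, zero_mul])
      have hmμ : m * μ = -L := by
        have h : (m * μ + L) * ((1 - (2 * a * t₁ * s₁ + 3 * b * s₁ ^ 2)) * y₁ ^ 3 * 2) = 0 := by
          linear_combination
            (-4 * m * t₁ * s₁ * y₁ ^ 3 * a - 6 * m * s₁ ^ 2 * y₁ ^ 3 * b + 2 * m * y₁ ^ 3) * hμdef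
            + (-2 * L * y₁ ^ 3 * x₁ + 2 * y₁ ^ 4) * hmu₂
            + (-3 * t₁ ^ 2 * y₁ ^ 2 * x₁ - 2 * t₁ * s₁ * y₁ ^ 2 * a - s₁ ^ 2 * y₁ ^ 2 * x₁ * a
              - 3 * s₁ ^ 2 * y₁ ^ 2 * b + y₁ ^ 2) * hL2
            + (6 * t₁ * y₁ ^ 4 - 9 * t₁ * y₁ ^ 2 * x₁ ^ 3 - 3 * t₁ * y₁ ^ 2 * x₁ * a
              + 6 * s₁ * y₁ ^ 4 * x₁ - 9 * s₁ * y₁ ^ 2 * x₁ ^ 4 - 9 * s₁ * y₁ ^ 2 * x₁ ^ 2 * a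
              - 2 * s₁ * y₁ ^ 2 * a ^ 2) * ht₁def
            + (6 * s₁ * y₁ ^ 3 * x₁ ^ 2 + 2 * s₁ * y₁ ^ 3 * a - 9 * s₁ * y₁ * x₁ ^ 5
              - 12 * s₁ * y₁ * x₁ ^ 3 * a - 9 * s₁ * y₁ * x₁ ^ 2 * b - 3 * s₁ * y₁ * x₁ * a ^ 2
              - 3 * s₁ * y₁ * a * b + 6 * y₁ ^ 2 * x₁ ^ 2 + 2 * y₁ ^ 2 * a - 9 * x₁ ^ 5
              - 12 * x₁ ^ 3 * a - 9 * x₁ ^ 2 * b - 3 * x₁ * a ^ 2 - 3 * a * b) * hs₁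
            + (9 * x₁ ^ 2 + 3 * a) * heq₁
        rcases mul_eq_zero.mp h with h' | h'
        · linear_combination h'
        · exact absurd h' (mul_ne_zero (mul_ne_zero hu.2 (pow_ne_zero 3 hy₁0)) h2ne)
      refine ⟨m, s₁ - m * t₁, hvm, hmμ, by ring, by rw [hs21, ht21]; ring,
        Or.inr ⟨ht21.symm, by linear_combination hmu₂⟩⟩
  -- shared tail
  have hcdef : c = s₁ - m * t₁ := by linear_combination -line₁
  have hcμ : c * μ = 1 := by
    linear_combination μ * hcdef + s₁ * hμdef - t₁ * hmμ + hs₁ + L * ht₁def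
  have hμ0 : μ ≠ 0 := fun h => by rw [h, mul_zero] at hcμ; exact zero_ne_one hcμ
  have hcL : c * L = -m := by
    have h : (c * L + m) * μ = 0 := by linear_combination L * hcμ + hmμ
    rcases mul_eq_zero.mp h with h' | h'
    · linear_combination h'
    · exact absurd h' hμ0
  by_cases hY0 : Y = 0
  · have hμL : L * x₃ + μ = 0 := by rw [hY0] at hYeq; linear_combination -hYeq
    have hL0 : L ≠ 0 := by
      intro h
      apply hμ0
      rw [h] at hμL
      simpa using hμL
    have h : L * (m * x₃ - 1) = 0 := by linear_combination m * hμL - hmμ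
    have hmx₃ : m * x₃ = 1 := by
      rcases mul_eq_zero.mp h with h' | h'
      · exact absurd h' hL0
      · exact sub_eq_zero.mp h'
    by_contra hcon
    push_neg at hcon
    have hcontr : (1 : Γ₀) < 1 := by
      calc (1 : Γ₀) = v (m * x₃) := by rw [hmx₃, v.map_one]
      _ = v m * v x₃ := v.map_mul _ _
      _ ≤ v m * 1 := mul_le_mul_right hcon _
      _ = v m := mul_one _
      _ < 1 := hvm
    exact absurd hcontr (lt_irrefl _)
  · obtain ⟨σ, hσ⟩ : ∃ s, s * Y = 1 := ⟨1 / Y, by field_simp⟩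
    obtain ⟨τ, hτdef⟩ : ∃ t, t = x₃ * σ := ⟨_, rfl⟩
    have hσ0 : σ ≠ 0 := fun h => by rw [h, zero_mul] at hσ; exact zero_ne_one hσ
    have relτ : σ = τ ^ 3 + a * τ * σ ^ 2 + b * σ ^ 3 := by
      rw [hτdef]
      linear_combination σ ^ 3 * hYcurve + (-Y * σ ^ 2 - σ) * hσ
    have hkey : c * Y = 1 - m * x₃ := by linear_combination c * hYeq + x₃ * hcL + hcμ
    have lineτ : σ = m * τ + c := by
      have h : (σ - (m * τ + c)) * Y = 0 := by
        linear_combination (-m * Y) * hτdef + (-m * x₃ + 1) * hσ - hkey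
      rcases mul_eq_zero.mp h with h' | h'
      · exact sub_eq_zero.mp h'
      · exact absurd h' hY0
    have hfinal := ts_main v ha hb rel₁ relτ line₁ line₂ lineτ hσ0 hvt₁ hvs₁ hvt₂ hvm hmult
    by_contra hcon
    push_neg at hcon
    have hvτ : v τ ≤ v σ := by
      rw [hτdef, v.map_mul]
      calc v x₃ * v σ ≤ 1 * v σ := mul_le_mul_left hcon _
      _ = v σ := one_mul _
    exact absurd (lt_of_lt_of_le hfinal hvτ) (lt_irrefl _)

end Helpers

section Glue

open WeierstrassCurve WeierstrassCurve.Affine WeierstrassCurve.Affine.Point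

variable {K : Type*} {Γ₀ : Type*} [Field K] [DecidableEq K] [LinearOrderedCommGroupWithZero Γ₀]
  (v : Valuation K Γ₀) (a b : K)

lemma shortW_negY (x y : K) : (shortW a b).negY x y = -y := by
  simp [WeierstrassCurve.Affine.negY, shortW]

lemma shortW_equation {x y : K} (h : (shortW a b).Equation x y) :
    y ^ 2 = x ^ 3 + a * x + b := by
  rw [WeierstrassCurve.Affine.equation_iff] at h
  simpa [shortW] using h

lemma xCoord_some {x y : K} (h : (shortW a b).Nonsingular x y) :
    xCoord (Point.some _ _ h) = x := rfl

lemma xCoord_neg (P : (shortW a b).Point) : xCoord (-P) = xCoord P := by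
  rcases P with _ | @⟨x, y, h⟩
  · rfl
  · rw [Point.neg_some]; rfl

lemma kernel_point_add (ha : v a ≤ 1) (hb : v b ≤ 1) {P Q : (shortW a b).Point}
    (hP : P = 0 ∨ 1 < v (xCoord P)) (hQ : Q = 0 ∨ 1 < v (xCoord Q)) :
    P + Q = 0 ∨ 1 < v (xCoord (P + Q)) := by
  rcases P with _ | @⟨x₁, y₁, h₁⟩
  · rw [← zero_def, zero_add]; exact hQ
  rcases Q with _ | @⟨x₂, y₂, h₂⟩
  · rw [← zero_def, add_zero]; exact hP
  have hx₁ : 1 < v x₁ := by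
    rcases hP with h | h
    · exact absurd h (Point.some_ne_zero h₁)
    · exact h
  have hx₂ : 1 < v x₂ := by
    rcases hQ with h | h
    · exact absurd h (Point.some_ne_zero h₂)
    · exact h
  have heq₁ : y₁ ^ 2 = x₁ ^ 3 + a * x₁ + b := shortW_equation a b h₁.1
  have heq₂ : y₂ ^ 2 = x₂ ^ 3 + a * x₂ + b := shortW_equation a b h₂.1
  by_cases hy : x₁ = x₂ ∧ y₁ = (shortW a b).negY x₂ y₂
  · exact Or.inl (Point.add_of_Y_eq hy.1 hy.2)
  · right
    have hxy : x₁ = x₂ → y₁ ≠ (shortW a b).negY x₂ y₂ := fun hx hy' => hy ⟨hx, hy'⟩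
    rw [Point.add_some hy]
    set L := (shortW a b).slope x₁ x₂ y₁ y₂ with hLdef
    have haddXv : (shortW a b).addX x₁ x₂ L = L ^ 2 - x₁ - x₂ := by
      rw [WeierstrassCurve.Affine.addX]
      simp [shortW]
    have hxc : xCoord (Point.some _ _ (nonsingular_add h₁ h₂ hy)) = (shortW a b).addX x₁ x₂ L := rfl
    rw [hxc, haddXv]
    have hEq := shortW_equation a b (equation_negAdd h₁.1 h₂.1 hy)
    rw [show (shortW a b).negAddY x₁ x₂ y₁ L = L * ((shortW a b).addX x₁ x₂ L - x₁) + y₁ from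
      rfl, haddXv] at hEq
    refine kernel_addX v ha hb heq₁ heq₂ hx₁ hx₂ ?_ ?_
    · exact hEq
    · by_cases hx : x₁ = x₂
      · right
        have hyne : y₁ ≠ (shortW a b).negY x₂ y₂ := hxy hx
        rw [shortW_negY] at hyne
        have hy12 : y₁ = y₂ := by
          have h : (y₁ - y₂) * (y₁ + y₂) = 0 := by
            linear_combination heq₁ - heq₂ + (x₁ ^ 2 + x₁ * x₂ + x₂ ^ 2 + a) * hx
          rcases mul_eq_zero.mp h with h' | h'
          · exact sub_eq_zero.mp h'
          · exact absurd (eq_neg_of_add_eq_zero_left h') hyne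
        have h2y : y₁ + y₁ ≠ 0 := by
          intro h
          exact hyne (by rw [← hy12]; exact eq_neg_of_add_eq_zero_left h)
        refine ⟨hx, hy12, h2y, ?_⟩
        have h2y' : 2 * y₁ ≠ 0 := by rwa [two_mul]
        have hLv : L = (3 * x₁ ^ 2 + a) / (2 * y₁) := by
          rw [hLdef, slope_of_Y_ne hx (hxy hx), shortW_negY]
          have e1 : (3 : K) * x₁ ^ 2 + 2 * (shortW a b).a₂ * x₁ + (shortW a b).a₄
              - (shortW a b).a₁ * y₁ = 3 * x₁ ^ 2 + a := by
            simp [shortW]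
          have e2 : y₁ - -y₁ = 2 * y₁ := by ring
          rw [e1, e2]
        rw [hLv, div_mul_cancel₀ _ h2y']
      · exact Or.inl ⟨hx, by rw [hLdef, slope_of_X_ne hx, div_mul_cancel₀ _
          (sub_ne_zero.mpr hx)]⟩

end Glue

open Classical in
/-- With `𝒮_n` the set of good primes dividing the denominator of `x(nP)`:
for nonzero integers `m, n`, `𝒮_m ∩ 𝒮_n = 𝒮_{gcd(m,n)}`. -/
theorem stmt_6 (K : Type*) [Field K] [NumberField K] (a b : K)
    (hΔ : (shortW a b).Δ ≠ 0)
    (hint : ∀ w : HeightOneSpectrum (𝓞 K),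
      w.valuation (K := K) a ≤ 1 ∧ w.valuation (K := K) b ≤ 1)
    (P : (shortW a b).Point) (hP : ∀ n : ℤ, n ≠ 0 → n • P ≠ 0)
    (S : ℤ → Set (HeightOneSpectrum (𝓞 K)))
    (hS : ∀ n : ℤ, S n = {w | GoodPrime (shortW a b) w ∧
      1 < w.valuation (K := K) (xCoord (n • P))})
    (m n : ℤ) (hm : m ≠ 0) (hn : n ≠ 0) :
    S m ∩ S n = S (Int.gcd m n) := by
  ext w
  obtain ⟨ha, hb⟩ := hint w
  set v := w.valuation (K := K) with hv
  -- the subgroup of multiples of `P` in the kernel of reduction at `w`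
  set H : AddSubgroup ℤ :=
    { carrier := {k : ℤ | k • P = 0 ∨ 1 < v (xCoord (k • P))}
      zero_mem' := Or.inl (zero_zsmul P)
      add_mem' := by
        intro j k hj hk
        rw [Set.mem_setOf_eq, add_zsmul]
        exact kernel_point_add v a b ha hb hj hk
      neg_mem' := by
        intro k hk
        rw [Set.mem_setOf_eq, neg_zsmul]
        rcases hk with h | h
        · rw [h, neg_zero]; exact Or.inl rfl
        · right; rwa [xCoord_neg] } with hH
  have hmem : ∀ k : ℤ, k ≠ 0 → (k ∈ H ↔ 1 < v (xCoord (k • P))) := by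
    intro k hk
    constructor
    · intro h
      rcases h with h | h
      · exact absurd h (hP k hk)
      · exact h
    · exact fun h => Or.inr h
  set d : ℤ := (Int.gcd m n : ℤ) with hd
  have hd0 : d ≠ 0 := by
    rw [hd]
    simp only [ne_eq, Int.natCast_eq_zero]
    intro h
    exact hm (Int.gcd_eq_zero_iff.mp h).1
  have hiff : (1 < v (xCoord (m • P)) ∧ 1 < v (xCoord (n • P)))
      ↔ 1 < v (xCoord (d • P)) := by
    constructor
    · rintro ⟨h1, h2⟩
      rw [← hmem d hd0]
      have hmH : m ∈ H := (hmem m hm).mpr h1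
      have hnH : n ∈ H := (hmem n hn).mpr h2
      have hbez : d = Int.gcdA m n * m + Int.gcdB m n * n := by
        rw [hd, Int.gcd_eq_gcd_ab]; ring
      rw [hbez]
      exact H.add_mem (by simpa [smul_eq_mul] using H.zsmul_mem hmH (Int.gcdA m n))
        (by simpa [smul_eq_mul] using H.zsmul_mem hnH (Int.gcdB m n))
    · intro h
      have hdH : d ∈ H := (hmem d hd0).mpr h
      obtain ⟨k1, hk1⟩ : d ∣ m := Int.gcd_dvd_left m n
      obtain ⟨k2, hk2⟩ : d ∣ n := Int.gcd_dvd_right m n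
      constructor
      · rw [← hmem m hm, hk1, mul_comm]
        simpa [smul_eq_mul] using H.zsmul_mem hdH k1
      · rw [← hmem n hn, hk2, mul_comm]
        simpa [smul_eq_mul] using H.zsmul_mem hdH k2
  simp only [hS, Set.mem_inter_iff, Set.mem_setOf_eq, ← hv, ← hd]
  constructor
  · rintro ⟨⟨hg, h1⟩, ⟨_, h2⟩⟩
    exact ⟨hg, hiff.mp ⟨h1, h2⟩⟩
  · rintro ⟨hg, h⟩
    obtain ⟨h1, h2⟩ := hiff.mpr h
    exact ⟨⟨hg, h1⟩, ⟨hg, h2⟩⟩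
end

section
/- Multiplication admits a positive existential definition in the structure (ℤ_{≥1}; 1, +, B), where B = {2^n + n² : n ≥ 1} is a unary predicate. That is, the graph {(u,v,w) : u = vw} is definable by a positive existential formula in this language. -/
/-!
Write `f n = 2 ^ n + n ^ 2`. Since `n ^ 2 < 2 ^ (n + 1)`, we have `2 f n < f (n + 2)`, so an
element `y` of `B` with `x < y < 2 x` is the successor `f (n + 1)` of `x = f n`. For a chain
`f n < f (n + 1) < f (n + 2)` the additive combinations `2 f n - f (n + 1) = n ^ 2 - 2 n - 1` and
`2 f (n + 1) - f (n + 2) = n ^ 2 - 2` no longer involve `2 ^ n`; with `n = v + 2` they define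
`w = v ^ 2` by two linear equations (which also force `y < 2 x` and `z < 2 y`). Finally
`u = v w` iff `(v + w) ^ 2 = v ^ 2 + w ^ 2 + 2 u`, and these relations combine because positive
existential definability is closed under conjunction, projection and substitution of terms.
-/

/-- Terms of the first-order language `(1, +)` in `n` variables. -/
inductive PETerm (n : ℕ) : Type
  | var : Fin n → PETerm n
  | one : PETerm n
  | add : PETerm n → PETerm n → PETerm n

/-- Value of a term in `ℤ_{≥1} = ℕ+`. -/
def PETerm.val {n : ℕ} (v : Fin n → ℕ+) : PETerm n → ℕ+
  | PETerm.var i => v i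
  | PETerm.one => 1
  | PETerm.add s t => s.val v + t.val v

/-- Quantifier-free positive formulas in the language `(1, +, B)` with `B` a unary
predicate: atomic formulas are equalities of terms and `B`-membership of a term, combined
using only `∧` and `∨`. -/
inductive PEForm (n : ℕ) : Type
  | eq : PETerm n → PETerm n → PEForm n
  | inB : PETerm n → PEForm n
  | and : PEForm n → PEForm n → PEForm n
  | or : PEForm n → PEForm n → PEForm n

/-- Satisfaction of a quantifier-free positive formula in `(ℤ_{≥1}; 1, +, B)`. -/
def PEForm.Holds (B : Set ℕ+) : {n : ℕ} → (Fin n → ℕ+) → PEForm n → Prop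
  | _, v, PEForm.eq s t => s.val v = t.val v
  | _, v, PEForm.inB t => t.val v ∈ B
  | _, v, PEForm.and φ ψ => φ.Holds B v ∧ ψ.Holds B v
  | _, v, PEForm.or φ ψ => φ.Holds B v ∨ ψ.Holds B v

/-- A set `A ⊆ (ℤ_{≥1})^k` is positive-existentially definable in `(ℤ_{≥1}; 1, +, B)` if it
is defined by an existentially quantified positive quantifier-free formula. -/
def PEDefinable (B : Set ℕ+) {k : ℕ} (A : Set (Fin k → ℕ+)) : Prop :=
  ∃ (m : ℕ) (φ : PEForm (k + m)),
    ∀ t : Fin k → ℕ+, t ∈ A ↔ ∃ x : Fin m → ℕ+, φ.Holds B (Fin.append t x)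

namespace PETerm

instance {n : ℕ} : One (PETerm n) := ⟨one⟩

instance {n : ℕ} : Add (PETerm n) := ⟨add⟩

variable {n n' : ℕ}

@[simp] theorem val_var (v : Fin n → ℕ+) (i : Fin n) : (var i).val v = v i := rfl

@[simp] theorem val_one (v : Fin n → ℕ+) : (1 : PETerm n).val v = 1 := rfl

@[simp] theorem val_add (v : Fin n → ℕ+) (s t : PETerm n) : (s + t).val v = s.val v + t.val v :=
  rfl

def subst (τ : Fin n → PETerm n') : PETerm n → PETerm n'
  | var i => τ i
  | one => one
  | add s t => add (s.subst τ) (t.subst τ)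

@[simp] theorem val_subst (τ : Fin n → PETerm n') (v : Fin n' → ℕ+) :
    ∀ t : PETerm n, (t.subst τ).val v = t.val fun i => (τ i).val v
  | var _ => rfl
  | one => rfl
  | add s t => congrArg₂ (· + ·) (val_subst τ v s) (val_subst τ v t)

end PETerm

namespace PEForm

variable {n n' : ℕ}

def subst (τ : Fin n → PETerm n') : PEForm n → PEForm n'
  | eq s t => eq (s.subst τ) (t.subst τ)
  | inB t => inB (t.subst τ)
  | and φ ψ => and (φ.subst τ) (ψ.subst τ)
  | or φ ψ => or (φ.subst τ) (ψ.subst τ)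

@[simp] theorem holds_subst (B : Set ℕ+) (τ : Fin n → PETerm n') (v : Fin n' → ℕ+) :
    ∀ φ : PEForm n, (φ.subst τ).Holds B v ↔ φ.Holds B fun i => (τ i).val v
  | eq s t => by simp [subst, Holds]
  | inB t => by simp [subst, Holds]
  | and φ ψ => by simp only [subst, Holds, holds_subst B τ v φ, holds_subst B τ v ψ]
  | or φ ψ => by simp only [subst, Holds, holds_subst B τ v φ, holds_subst B τ v ψ]

end PEForm

theorem Fin.exists_append_iff {α : Type*} {m n : ℕ} {P : (Fin (m + n) → α) → Prop} :
    (∃ x, P x) ↔ ∃ y z, P (Fin.append y z) :=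
  (Fin.appendEquiv m n).surjective.exists.trans Prod.exists

open PETerm

namespace PEDefinable

variable {B : Set ℕ+} {k : ℕ}

theorem of_holds (φ : PEForm k) : PEDefinable B {t | φ.Holds B t} := by
  refine ⟨0, φ.subst fun i => var (Fin.castAdd 0 i), fun t => ?_⟩
  simp only [Set.mem_ofPred_eq, PEForm.holds_subst, val_var, Fin.append_left]
  exact ⟨fun h => ⟨finZeroElim, h⟩, fun ⟨_, h⟩ => h⟩

theorem eq (s t : PETerm k) : PEDefinable B {x | s.val x = t.val x} := by
  simpa only [PEForm.Holds] using of_holds (B := B) (.eq s t)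

theorem subst {k' : ℕ} {A : Set (Fin k → ℕ+)} (h : PEDefinable B A) (τ : Fin k → PETerm k') :
    PEDefinable B {t | (fun i => (τ i).val t) ∈ A} := by
  obtain ⟨m, φ, hφ⟩ := h
  let σ : Fin (k + m) → PETerm (k' + m) :=
    Fin.append (fun i => (τ i).subst fun j => var (Fin.castAdd m j)) fun j => var (Fin.natAdd k' j)
  refine ⟨m, φ.subst σ, fun t => ?_⟩
  have hval (x : Fin m → ℕ+) :
      (fun i => (σ i).val (Fin.append t x)) = Fin.append (fun i => (τ i).val t) x := by
    ext i
    refine Fin.addCases (fun i => ?_) (fun j => ?_) i <;> simp [σ]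
  simp only [Set.mem_ofPred_eq, hφ, PEForm.holds_subst, hval]

theorem inter {A₁ A₂ : Set (Fin k → ℕ+)} (h₁ : PEDefinable B A₁) (h₂ : PEDefinable B A₂) :
    PEDefinable B (A₁ ∩ A₂) := by
  obtain ⟨m₁, φ₁, hφ₁⟩ := h₁
  obtain ⟨m₂, φ₂, hφ₂⟩ := h₂
  let τ₁ : Fin (k + m₁) → PETerm (k + (m₁ + m₂)) :=
    Fin.append (fun i => var (Fin.castAdd _ i)) fun j => var (Fin.natAdd k (Fin.castAdd m₂ j))
  let τ₂ : Fin (k + m₂) → PETerm (k + (m₁ + m₂)) :=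
    Fin.append (fun i => var (Fin.castAdd _ i)) fun j => var (Fin.natAdd k (Fin.natAdd m₁ j))
  refine ⟨m₁ + m₂, (φ₁.subst τ₁).and (φ₂.subst τ₂), fun t => ?_⟩
  have hval₁ (x₁ : Fin m₁ → ℕ+) (x₂ : Fin m₂ → ℕ+) :
      (fun i => (τ₁ i).val (Fin.append t (Fin.append x₁ x₂))) = Fin.append t x₁ := by
    ext i
    refine Fin.addCases (fun i => ?_) (fun j => ?_) i <;> simp [τ₁]
  have hval₂ (x₁ : Fin m₁ → ℕ+) (x₂ : Fin m₂ → ℕ+) :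
      (fun i => (τ₂ i).val (Fin.append t (Fin.append x₁ x₂))) = Fin.append t x₂ := by
    ext i
    refine Fin.addCases (fun i => ?_) (fun j => ?_) i <;> simp [τ₂]
  simp only [Set.mem_inter_iff, hφ₁, hφ₂, PEForm.Holds, PEForm.holds_subst]
  rw [Fin.exists_append_iff]
  simp only [hval₁, hval₂, exists_and_left, exists_and_right]

theorem exists_append {m : ℕ} {A : Set (Fin (k + m) → ℕ+)} (h : PEDefinable B A) :
    PEDefinable B {t | ∃ x : Fin m → ℕ+, Fin.append t x ∈ A} := by
  obtain ⟨m', φ, hφ⟩ := h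
  refine ⟨m + m', φ.subst fun i => var (Fin.cast (Nat.add_assoc k m m') i), fun t => ?_⟩
  simp only [Set.mem_ofPred_eq, hφ, Fin.exists_append_iff (P := fun x => PEForm.Holds _ _ _),
    PEForm.holds_subst, val_var]
  simp only [← Function.comp_def (Fin.append t _), ← Fin.append_assoc]

end PEDefinable

theorem sq_lt_two_pow_succ (n : ℕ) : n ^ 2 < 2 ^ (n + 1) := by
  induction n with
  | zero => norm_num
  | succ n ih =>
    have := n.lt_two_pow_self
    rw [pow_succ 2] at ih ⊢
    calc (n + 1) ^ 2 = n ^ 2 + (2 * n + 1) := by ring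
      _ < 2 ^ n * 2 * 2 := by omega

def powAddSq (n : ℕ) : ℕ := 2 ^ n + n ^ 2

theorem powAddSq_succ (n : ℕ) : powAddSq (n + 1) = powAddSq n + 2 ^ n + 2 * n + 1 := by
  unfold powAddSq; ring

theorem powAddSq_strictMono : StrictMono powAddSq :=
  strictMono_nat_of_lt_succ fun n => by rw [powAddSq_succ]; have := n.two_pow_pos; omega

theorem two_mul_powAddSq_lt (n : ℕ) : 2 * powAddSq n < powAddSq (n + 2) := by
  have := sq_lt_two_pow_succ n
  rw [powAddSq_succ, powAddSq_succ, pow_succ]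
  unfold powAddSq
  omega

theorem eq_succ_of_powAddSq_lt_of_lt_two_mul {i j : ℕ} (h₁ : powAddSq i < powAddSq j)
    (h₂ : powAddSq j < 2 * powAddSq i) : j = i + 1 := by
  have := powAddSq_strictMono.lt_iff_lt.1 h₁
  have := powAddSq_strictMono.lt_iff_lt.1 (h₂.trans (two_mul_powAddSq_lt i))
  omega

theorem eq_mul_self_of_powAddSq {i j l v w : ℕ} (hv : 0 < v)
    (hij : powAddSq i < powAddSq j) (hjl : powAddSq j < powAddSq l)
    (h₁ : 2 * powAddSq i + 1 = powAddSq j + w + 2 * v)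
    (h₂ : 2 * powAddSq j = powAddSq l + w + 4 * v + 2) : w = v * v := by
  obtain rfl := eq_succ_of_powAddSq_lt_of_lt_two_mul hij (by omega)
  obtain rfl := eq_succ_of_powAddSq_lt_of_lt_two_mul hjl (by omega)
  simp only [powAddSq_succ, pow_succ] at h₁ h₂
  obtain rfl : i = v + 2 := by omega
  unfold powAddSq at h₁
  nlinarith

def powAddSqSet : Set ℕ+ := {x | ∃ n, 1 ≤ n ∧ (x : ℕ) = powAddSq n}

theorem eq_mul_self_iff_exists_powAddSq (v w : ℕ+) :
    w = v * v ↔ ∃ x y z d e : ℕ+, x ∈ powAddSqSet ∧ y ∈ powAddSqSet ∧ z ∈ powAddSqSet ∧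
      y = x + d ∧ z = y + e ∧ x + x + 1 = y + w + v + v ∧
      y + y = z + w + v + v + v + v + 1 + 1 := by
  constructor
  · rintro rfl
    refine ⟨2 ^ (v + 2 : ℕ) + (v + 2) ^ 2, 2 ^ (v + 3 : ℕ) + (v + 3) ^ 2,
      2 ^ (v + 4 : ℕ) + (v + 4) ^ 2, 2 ^ (v + 2 : ℕ) + 2 * (v + 2) + 1,
      2 ^ (v + 3 : ℕ) + 2 * (v + 3) + 1, ⟨v + 2, by omega, by push_cast; rfl⟩,
      ⟨v + 3, by omega, by push_cast; rfl⟩, ⟨v + 4, by omega, by push_cast; rfl⟩,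
      ?_, ?_, ?_, ?_⟩ <;>
    · apply PNat.eq
      push_cast
      ring
  · rintro ⟨x, y, z, d, e, ⟨i, -, hx⟩, ⟨j, -, hy⟩, ⟨l, -, hz⟩, rfl, rfl, h₁, h₂⟩
    apply PNat.eq
    have h₁ := congrArg PNat.val h₁
    have h₂ := congrArg PNat.val h₂
    push_cast at hx hy hz h₁ h₂ ⊢
    refine eq_mul_self_of_powAddSq v.pos (i := i) (j := j) (l := l) ?_ ?_ ?_ ?_ <;>
      linarith [d.pos, e.pos]

open PEForm in
theorem PEDefinable.eq_mul_self {k : ℕ} (s t : PETerm k) :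
    PEDefinable powAddSqSet {x | t.val x = s.val x * s.val x} := by
  suffices h : PEDefinable powAddSqSet {w : Fin 2 → ℕ+ | w 1 = w 0 * w 0} from h.subst ![s, t]
  -- the variables are `v, w, x, y, z, d, e` of `eq_mul_self_iff_exists_powAddSq`
  refine ⟨5, (inB (var 2)).and <| (inB (var 3)).and <| (inB (var 4)).and <|
    (PEForm.eq (var 3) (var 2 + var 5)).and <| (PEForm.eq (var 4) (var 3 + var 6)).and <|
    (PEForm.eq (var 2 + var 2 + 1) (var 3 + var 1 + var 0 + var 0)).and <|
    PEForm.eq (var 3 + var 3) (var 4 + var 1 + var 0 + var 0 + var 0 + var 0 + 1 + 1), fun w => ?_⟩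
  rw [Set.mem_ofPred_eq, eq_mul_self_iff_exists_powAddSq]
  simp only [Holds, val_var, val_add, val_one]
  exact ⟨fun ⟨x, y, z, d, e, h⟩ => ⟨![x, y, z, d, e], h⟩,
    fun ⟨x, h⟩ => ⟨x 0, x 1, x 2, x 3, x 4, h⟩⟩

theorem eq_mul_iff_exists_mul_self (u v w : ℕ+) : u = v * w ↔
    ∃ p q r : ℕ+, p = v * v ∧ q = w * w ∧ r = (v + w) * (v + w) ∧ r = p + q + u + u := by
  constructor
  · rintro rfl
    exact ⟨_, _, _, rfl, rfl, rfl, PNat.eq (by push_cast; ring)⟩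
  · rintro ⟨p, q, r, rfl, rfl, rfl, h⟩
    apply PNat.eq
    have h := congrArg PNat.val h
    push_cast at h ⊢
    nlinarith

/-- Multiplication admits a positive existential definition in the structure
`(ℤ_{≥1}; 1, +, B)` where `B = {2ⁿ + n² : n ≥ 1}`. -/
theorem stmt_14 :
    PEDefinable {x : ℕ+ | ∃ n : ℕ, 1 ≤ n ∧ (x : ℕ) = 2 ^ n + n ^ 2}
      {u : Fin 3 → ℕ+ | u 0 = u 1 * u 2} := by
  show PEDefinable powAddSqSet _
  -- the variables are `u, v, w, p, q, r` of `eq_mul_iff_exists_mul_self`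
  have h : PEDefinable powAddSqSet
      {u : Fin 3 → ℕ+ | ∃ x : Fin 3 → ℕ+, Fin.append u x ∈ _} :=
    .exists_append <| (PEDefinable.eq_mul_self (var 1) (var 3)).inter <|
      (PEDefinable.eq_mul_self (var 2) (var 4)).inter <|
      (PEDefinable.eq_mul_self (var 1 + var 2) (var 5)).inter <|
      .eq (var 5) (var 3 + var 4 + var 0 + var 0)
  convert h using 1
  ext u
  rw [Set.mem_ofPred_eq, eq_mul_iff_exists_mul_self]
  exact ⟨fun ⟨p, q, r, h⟩ => ⟨![p, q, r], h⟩, fun ⟨x, h⟩ => ⟨x 0, x 1, x 2, h⟩⟩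
end
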